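/- arXiv:1303.3461 — 2 statements merged into one kernel-verified Lean document; each statement's English description precedes it below -/
import Mathlib

section
/- For every natural number d ≥ 3, the polytope Q(d) has at least d/3 vertices; that is, the number of extreme points of Q(d) is at least d/3. -/
/-- The set of exponent vectors of degree-`d` monomials in three variables:
`Δ = {ν ∈ ℕ³ : ν₁ + ν₂ + ν₃ = d}`. -/
def Delta (d : ℕ) : Set (Fin 3 → ℕ) := {ν | ν 0 + ν 1 + ν 2 = d}

/-- `N(d)`: the collection of subsets `J ⊆ Δ` with `|J| = d + 1`. -/
def Nd (d : ℕ) : Set (Finset (Fin 3 → ℕ)) := {J | ↑J ⊆ Delta d ∧ J.card = d + 1}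

/-- `m_J = Σ_{ν ∈ J} ν ∈ ℕ³`. -/
def mJ (J : Finset (Fin 3 → ℕ)) : Fin 3 → ℕ := ∑ ν ∈ J, ν

/-- The inclusion `ℕ³ ⊆ ℝ³`. -/
def toR (ν : Fin 3 → ℕ) : Fin 3 → ℝ := fun i => (ν i : ℝ)

/-- The polytope `Q(d) = conv(m_J : J ∈ N(d)) ⊆ ℝ³`. -/
def Qpoly (d : ℕ) : Set (Fin 3 → ℝ) :=
  convexHull ℝ {x | ∃ J ∈ Nd d, x = toR (mJ J)}

/-!
For `3k ≤ d + 1` let `A_k ⊆ Δ` consist of the monomials `(i, d - i, 0)` with `i ≥ k` and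
`(i, d - 1 - i, 1)` with `i ≥ d - k`; it has `d + 1` elements. The functional
`ν ↦ ν₀ - (d - 2k) ν₂` is at least `k` on `A_k` and at most `k - 1` on `Δ \ A_k`, so `A_k` is the
only `J ∈ N(d)` for which `m_J` maximizes it, and `m_{A_k}` is a vertex of `Q(d)`. The third
coordinate of `m_{A_k}` is `k`, so `k = 0, …, ⌊(d + 1)/3⌋` give more than `d/3` distinct vertices.
-/

section ExtremePoints

variable {𝕜 E : Type*} [Field 𝕜] [LinearOrder 𝕜] [IsStrictOrderedRing 𝕜] [AddCommGroup E]
  [Module 𝕜 E]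

theorem convex_insert_setOf_lt (l : E →ₗ[𝕜] 𝕜) (x : E) :
    Convex 𝕜 (insert x {y | l y < l x}) := by
  have hle : ∀ y ∈ insert x {y | l y < l x}, l y ≤ l x := by
    rintro y (rfl | hy)
    exacts [le_rfl, hy.le]
  rw [convex_iff_openSegment_subset]
  rintro y hy z hz _ ⟨a, b, ha, hb, hab, rfl⟩
  by_cases hyz : y = x ∧ z = x
  · left
    rw [hyz.1, hyz.2, ← add_smul, hab, one_smul]
  · right
    have hlt : a * l y + b * l z < a * l x + b * l x := by
      rcases not_and_or.1 hyz with hyx | hzx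
      · exact add_lt_add_of_lt_of_le (by gcongr; exact hy.resolve_left hyx) (by gcongr; exact hle z hz)
      · exact add_lt_add_of_le_of_lt (by gcongr; exact hle y hy) (by gcongr; exact hz.resolve_left hzx)
    simpa [← add_mul, hab] using hlt

theorem mem_extremePoints_convexHull_of_forall_lt {S : Set E} (l : E →ₗ[𝕜] 𝕜) {x : E}
    (hx : x ∈ S) (h : ∀ y ∈ S, y ≠ x → l y < l x) :
    x ∈ (convexHull 𝕜 S).extremePoints 𝕜 := by
  have hS : convexHull 𝕜 S ⊆ insert x {y | l y < l x} :=
    convexHull_min (fun y hy ↦ (eq_or_ne y x).imp id (h y hy)) (convex_insert_setOf_lt l x)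
  have hdiff : convexHull 𝕜 S \ {x} = convexHull 𝕜 S ∩ {y | l y < l x} := by
    ext y
    constructor
    · rintro ⟨hy, hyx⟩
      exact ⟨hy, (hS hy).resolve_left hyx⟩
    · rintro ⟨hy, hlt⟩
      exact ⟨hy, fun hyx ↦ hlt.ne (by rw [Set.mem_singleton_iff.1 hyx])⟩
  rw [(convex_convexHull 𝕜 S).mem_extremePoints_iff_convex_sdiff, hdiff]
  exact ⟨subset_convexHull 𝕜 S hx,
    (convex_convexHull 𝕜 S).inter (convex_halfSpace_lt l.isLinear _)⟩

end ExtremePoints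

open Finset

theorem Finset.sum_lt_sum_of_card_eq {ι M : Type*} [DecidableEq ι] [AddCommMonoid M]
    [PartialOrder M] [IsOrderedCancelAddMonoid M] {s t : Finset ι} {f : ι → M} (c : M)
    (hcard : #s = #t) (hne : s ≠ t) (hs : ∀ x ∈ s \ t, f x ≤ c) (ht : ∀ x ∈ t \ s, c < f x) :
    ∑ x ∈ s, f x < ∑ x ∈ t, f x := by
  have hts : (t \ s).Nonempty := by
    rw [sdiff_nonempty]
    exact fun hts ↦ hne (eq_of_subset_of_card_le hts hcard.le).symm
  calc ∑ x ∈ s, f x = ∑ x ∈ s ∩ t, f x + ∑ x ∈ s \ t, f x := (sum_inter_add_sum_sdiff ..).symm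
    _ ≤ ∑ x ∈ s ∩ t, f x + #(s \ t) • c := by grw [sum_le_card_nsmul _ _ _ hs]
    _ = ∑ x ∈ t ∩ s, f x + ∑ x ∈ t \ s, c := by
      rw [inter_comm, card_sdiff_comm hcard, sum_const]
    _ < ∑ x ∈ t ∩ s, f x + ∑ x ∈ t \ s, f x := by
      gcongr ?_ + ?_
      exact sum_lt_sum_of_nonempty hts ht
    _ = ∑ x ∈ t, f x := sum_inter_add_sum_sdiff ..

def row0 (d i : ℕ) : Fin 3 → ℕ := ![i, d - i, 0]

def row1 (d i : ℕ) : Fin 3 → ℕ := ![i, d - 1 - i, 1]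

theorem row0_injective (d : ℕ) : Function.Injective (row0 d) :=
  fun _ _ h ↦ by simpa [row0] using congrFun h 0

theorem row1_injective (d : ℕ) : Function.Injective (row1 d) :=
  fun _ _ h ↦ by simpa [row1] using congrFun h 0

def twoRowSet (d k : ℕ) : Finset (Fin 3 → ℕ) :=
  (Icc k d).image (row0 d) ∪ (Ico (d - k) d).image (row1 d)

theorem mem_twoRowSet {d k : ℕ} {ν : Fin 3 → ℕ} :
    ν ∈ twoRowSet d k ↔
      (∃ i, (k ≤ i ∧ i ≤ d) ∧ row0 d i = ν) ∨ ∃ i, (d - k ≤ i ∧ i < d) ∧ row1 d i = ν := by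
  simp only [twoRowSet, mem_union, mem_image, mem_Icc, mem_Ico]

theorem disjoint_row0_row1 (d : ℕ) (s t : Finset ℕ) :
    Disjoint (s.image (row0 d)) (t.image (row1 d)) := by
  simp only [disjoint_left, mem_image]
  rintro _ ⟨i, -, rfl⟩ ⟨j, -, h⟩
  simpa [row0, row1] using congrFun h 2

theorem card_twoRowSet {d k : ℕ} (hk : k ≤ d) : #(twoRowSet d k) = d + 1 := by
  rw [twoRowSet, card_union_of_disjoint (disjoint_row0_row1 d _ _),
    card_image_of_injective _ (row0_injective d), card_image_of_injective _ (row1_injective d),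
    Nat.card_Icc, Nat.card_Ico]
  omega

theorem twoRowSet_mem_Nd {d k : ℕ} (hk : k ≤ d) : twoRowSet d k ∈ Nd d := by
  refine ⟨fun ν hν ↦ ?_, card_twoRowSet hk⟩
  rcases mem_twoRowSet.1 hν with ⟨i, ⟨-, hid⟩, rfl⟩ | ⟨i, ⟨-, hid⟩, rfl⟩
  · show i + (d - i) + 0 = d
    omega
  · show i + (d - 1 - i) + 1 = d
    omega

theorem mJ_twoRowSet_two {d k : ℕ} (hk : k ≤ d) : mJ (twoRowSet d k) 2 = k := by
  rw [mJ, Finset.sum_apply, twoRowSet, sum_union (disjoint_row0_row1 d _ _),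
    sum_image fun _ _ _ _ h ↦ row0_injective d h, sum_image fun _ _ _ _ h ↦ row1_injective d h]
  simp only [row0, row1, Matrix.cons_val, sum_const_zero, sum_const, Nat.card_Ico, smul_eq_mul,
    mul_one, zero_add]
  omega

theorem toR_mJ (J : Finset (Fin 3 → ℕ)) : toR (mJ J) = ∑ ν ∈ J, toR ν := by
  ext i
  simp [toR, mJ, Finset.sum_apply]

noncomputable def tiltedFunctional (β : ℝ) : (Fin 3 → ℝ) →ₗ[ℝ] ℝ :=
  LinearMap.proj 0 - β • LinearMap.proj 2

theorem tiltedFunctional_toR (β : ℝ) (ν : Fin 3 → ℕ) :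
    tiltedFunctional β (toR ν) = ν 0 - β * ν 2 := by
  simp [tiltedFunctional, toR]

theorem le_tiltedFunctional_of_mem_twoRowSet {d k : ℕ} {ν : Fin 3 → ℕ}
    (hν : ν ∈ twoRowSet d k) : (k : ℝ) ≤ tiltedFunctional (d - 2 * k) (toR ν) := by
  rw [tiltedFunctional_toR]
  rcases mem_twoRowSet.1 hν with ⟨i, ⟨hki, -⟩, rfl⟩ | ⟨i, ⟨hki, hid⟩, rfl⟩
  · simpa [row0] using hki
  · have : (d : ℝ) ≤ i + k := by exact_mod_cast (by omega : d ≤ i + k)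
    simp only [row1, Matrix.cons_val_zero, Matrix.cons_val_two, Matrix.tail_cons, Matrix.head_cons]
    push_cast
    linarith

theorem tiltedFunctional_le_of_notMem_twoRowSet {d k : ℕ} (hk : 3 * k ≤ d + 1) {ν : Fin 3 → ℕ}
    (hν : ν ∈ Delta d) (hνk : ν ∉ twoRowSet d k) :
    tiltedFunctional (d - 2 * k) (toR ν) ≤ k - 1 := by
  have hsum : ν 0 + ν 1 + ν 2 = d := hν
  rw [tiltedFunctional_toR]
  obtain h | h | h : ν 2 = 0 ∨ ν 2 = 1 ∨ 2 ≤ ν 2 := by omega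
  · have hrow : row0 d (ν 0) = ν := by
      funext i
      fin_cases i <;> simp only [row0, Fin.isValue, Fin.zero_eta, Fin.mk_one, Fin.reduceFinMk,
        Matrix.cons_val_zero, Matrix.cons_val_one, Matrix.cons_val] <;> omega
    have : ν 0 + 1 ≤ k := by
      by_contra! hlt
      exact hνk (mem_twoRowSet.2 (Or.inl ⟨ν 0, ⟨by omega, by omega⟩, hrow⟩))
    have : (ν 0 : ℝ) + 1 ≤ k := by exact_mod_cast this
    rw [h]
    push_cast
    linarith
  · have hrow : row1 d (ν 0) = ν := by
      funext i
      fin_cases i <;> simp only [row1, Fin.isValue, Fin.zero_eta, Fin.mk_one, Fin.reduceFinMk,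
        Matrix.cons_val_zero, Matrix.cons_val_one, Matrix.cons_val] <;> omega
    have : ν 0 + 1 + k ≤ d := by
      by_contra! hlt
      exact hνk (mem_twoRowSet.2 (Or.inr ⟨ν 0, ⟨by omega, by omega⟩, hrow⟩))
    have : (ν 0 : ℝ) + 1 + k ≤ d := by exact_mod_cast this
    rw [h]
    push_cast
    linarith
  · have h02 : ((ν 0 + ν 2 : ℕ) : ℝ) ≤ d := by exact_mod_cast (by omega : ν 0 + ν 2 ≤ d)
    have h2 : (2 : ℝ) ≤ ν 2 := by exact_mod_cast h
    have hk' : ((3 * k : ℕ) : ℝ) ≤ (d + 1 : ℕ) := by exact_mod_cast hk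
    push_cast at h02 hk'
    nlinarith [mul_le_mul_of_nonneg_left h2 (by linarith : (0 : ℝ) ≤ d - 2 * k + 1)]

theorem tiltedFunctional_mJ_lt {d k : ℕ} (hk : 3 * k ≤ d + 1) {J : Finset (Fin 3 → ℕ)}
    (hJ : J ∈ Nd d) (hne : J ≠ twoRowSet d k) :
    tiltedFunctional (d - 2 * k) (toR (mJ J)) <
      tiltedFunctional (d - 2 * k) (toR (mJ (twoRowSet d k))) := by
  simp only [toR_mJ, map_sum]
  refine sum_lt_sum_of_card_eq ((k : ℝ) - 1) (by rw [hJ.2, card_twoRowSet (by omega)]) hne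
    (fun ν hν ↦ ?_) (fun ν hν ↦ ?_)
  · exact tiltedFunctional_le_of_notMem_twoRowSet hk (hJ.1 (mem_sdiff.1 hν).1) (mem_sdiff.1 hν).2
  · linarith [le_tiltedFunctional_of_mem_twoRowSet (mem_sdiff.1 hν).1]

theorem toR_mJ_twoRowSet_mem_extremePoints {d k : ℕ} (hk : 3 * k ≤ d + 1) :
    toR (mJ (twoRowSet d k)) ∈ (Qpoly d).extremePoints ℝ := by
  refine mem_extremePoints_convexHull_of_forall_lt (tiltedFunctional (d - 2 * k))
    ⟨_, twoRowSet_mem_Nd (by omega), rfl⟩ ?_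
  rintro _ ⟨J, hJ, rfl⟩ hne
  exact tiltedFunctional_mJ_lt hk hJ fun hJk ↦ hne (by rw [hJk])

theorem toR_mJ_twoRowSet_injOn (d : ℕ) :
    Set.InjOn (fun k ↦ toR (mJ (twoRowSet d k))) (Set.Iic d) := fun a ha b hb hab ↦ by
  have := congrFun hab 2
  simp only [toR] at this
  rwa [mJ_twoRowSet_two ha, mJ_twoRowSet_two hb, Nat.cast_inj] at this

theorem Delta_finite (d : ℕ) : (Delta d).Finite :=
  (Set.finite_Iic fun _ ↦ d).subset fun ν (hν : ν 0 + ν 1 + ν 2 = d) i ↦ by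
    fin_cases i <;> simp only [Fin.isValue, Fin.zero_eta, Fin.mk_one, Fin.reduceFinMk] <;> omega

theorem Nd_finite (d : ℕ) : (Nd d).Finite :=
  ((Delta_finite d).finite_subsets.preimage coe_injective.injOn).subset fun _ hJ ↦ hJ.1

theorem extremePoints_Qpoly_finite (d : ℕ) : ((Qpoly d).extremePoints ℝ).Finite :=
  ((Nd_finite d).image fun J ↦ toR (mJ J)).subset <| extremePoints_convexHull_subset.trans
    fun _ ⟨J, hJ, hx⟩ ↦ ⟨J, hJ, hx.symm⟩

theorem Qpoly_vertices_ge_general (d : ℕ) :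
    (d : ℝ) / 3 ≤ ((Set.extremePoints ℝ (Qpoly d)).ncard : ℝ) := by
  set K := (d + 1) / 3
  set vertices := (range (K + 1)).image fun k ↦ toR (mJ (twoRowSet d k))
  have hinj : Set.InjOn (fun k ↦ toR (mJ (twoRowSet d k))) (range (K + 1)) :=
    (toR_mJ_twoRowSet_injOn d).mono fun k hk ↦ by
      have := Finset.mem_range.1 hk
      exact Set.mem_Iic.2 (by omega)
  have hsub : ↑vertices ⊆ (Qpoly d).extremePoints ℝ := by
    simp only [vertices, coe_image, coe_range, Set.image_subset_iff]
    exact fun k hk ↦ toR_mJ_twoRowSet_mem_extremePoints (by have := Set.mem_Iio.1 hk; omega)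
  calc (d : ℝ) / 3 ≤ K + 1 := by
        rw [div_le_iff₀ three_pos]
        exact_mod_cast (by omega : d ≤ (K + 1) * 3)
    _ = #vertices := by rw [card_image_of_injOn hinj, card_range, Nat.cast_succ]
    _ ≤ _ := by
      rw [← Set.ncard_coe_finset]
      exact_mod_cast Set.ncard_le_ncard hsub (extremePoints_Qpoly_finite d)

/-- For every `d ≥ 3`, the polytope `Q(d)` has at least `d/3` vertices:
the number of extreme points of `Q(d)` is at least `d/3`. -/
theorem Qpoly_vertices_ge (d : ℕ) (hd : 3 ≤ d) :
    (d : ℝ) / 3 ≤ ((Set.extremePoints ℝ (Qpoly d)).ncard : ℝ) :=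
  Qpoly_vertices_ge_general d
end

section
/- Let d ≥ 3 and let n be an integer with 0 ≤ n < d/3. Set ω(n) = (2n−d−2, 2n−d+1, 2d−4n+1) ∈ ℝ³. Then ω(n)·m_{J(n)} < ω(n)·m_{J'} for every J' ∈ N(d) with J' ≠ J(n). -/
/-- The index set
`J(n) = {(d−a−1, a, 1) : 0 ≤ a ≤ n−1} ∪ {(d−b, b, 0) : 0 ≤ b ≤ d−n}`. -/
def Jn (d n : ℕ) : Finset (Fin 3 → ℕ) :=
  ((Finset.range n).image fun a => ![d - a - 1, a, 1]) ∪
    ((Finset.range (d - n + 1)).image fun b => ![d - b, b, 0])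

/-- The standard inner product `ω · ν` on `ℝ³` (viewing `ℕ³ ⊆ ℝ³`). -/
def dotp (ω : Fin 3 → ℝ) (ν : Fin 3 → ℕ) : ℝ := ∑ i, ω i * (ν i : ℝ)

/-- `ω(n) = (2n − d − 2, 2n − d + 1, 2d − 4n + 1) ∈ ℝ³`. -/
def omegaN (d n : ℕ) : Fin 3 → ℝ :=
  ![2 * (n : ℝ) - d - 2, 2 * (n : ℝ) - d + 1, 2 * (d : ℝ) - 4 * n + 1]

open Finset

theorem Finset.sum_lt_sum_of_card_eq_of_le_of_lt {ι M : Type*} [DecidableEq ι]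
    [AddCommMonoid M] [PartialOrder M] [IsOrderedCancelAddMonoid M]
    {f : ι → M} {S T : Finset ι} {B : M} (hcard : #S = #T) (hne : S ≠ T)
    (hS : ∀ i ∈ S, f i ≤ B) (hT : ∀ i ∈ T, i ∉ S → B < f i) :
    ∑ i ∈ S, f i < ∑ i ∈ T, f i := by
  have hTS : (T \ S).Nonempty :=
    sdiff_nonempty.2 fun h => hne (eq_of_subset_of_card_le h hcard.le).symm
  have hsdiff : ∑ i ∈ S \ T, f i < ∑ i ∈ T \ S, f i :=
    calc ∑ i ∈ S \ T, f i ≤ #(S \ T) • B :=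
          sum_le_card_nsmul _ _ _ fun i hi => hS i (mem_sdiff.1 hi).1
      _ = ∑ _i ∈ T \ S, B := by rw [sum_const, card_sdiff_comm hcard]
      _ < ∑ i ∈ T \ S, f i :=
          sum_lt_sum_of_nonempty hTS fun i hi => hT i (mem_sdiff.1 hi).1 (mem_sdiff.1 hi).2
  rw [← sum_inter_add_sum_sdiff S T, ← sum_inter_add_sum_sdiff T S, inter_comm T S]
  gcongr

lemma dotp_mJ (ω : Fin 3 → ℝ) (J : Finset (Fin 3 → ℕ)) :
    dotp ω (mJ J) = ∑ ν ∈ J, dotp ω ν := by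
  simp only [dotp, mJ, Finset.sum_apply, Nat.cast_sum, mul_sum]
  exact sum_comm

/-- Only meaningful for `2 * n ≤ d + 1`, where the subtraction does not truncate. -/
def weightJn (d n : ℕ) (ν : Fin 3 → ℕ) : ℕ := ν 1 + (d + 1 - 2 * n) * ν 2

lemma dotp_omegaN_of_mem_Delta {d n : ℕ} {ν : Fin 3 → ℕ} (hn : 2 * n ≤ d + 1)
    (hν : ν ∈ Delta d) :
    dotp (omegaN d n) ν = (2 * n - d - 2) * d + 3 * (weightJn d n ν : ℝ) := by
  have hsum : (ν 0 : ℝ) + ν 1 + ν 2 = d := by exact_mod_cast hν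
  simp only [dotp, omegaN, weightJn, Fin.sum_univ_three, Nat.cast_add, Nat.cast_mul,
    Nat.cast_sub hn, Nat.cast_ofNat, Nat.cast_one, Matrix.cons_val_zero, Matrix.cons_val_one,
    Matrix.cons_val_two, Matrix.head_cons, Matrix.tail_cons]
  linear_combination (2 * (n : ℝ) - d - 2) * hsum

lemma mem_Jn_iff {d n : ℕ} {ν : Fin 3 → ℕ} (hn : 3 * n < d) :
    ν ∈ Jn d n ↔ ν ∈ Delta d ∧ weightJn d n ν ≤ d - n := by
  simp only [Jn, mem_union, mem_image, mem_range]
  constructor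
  · rintro (⟨a, ha, rfl⟩ | ⟨b, hb, rfl⟩) <;> simp [Delta, weightJn] <;> omega
  · rintro ⟨hΔ, hw⟩
    simp only [Delta, Set.mem_ofPred_eq] at hΔ
    simp only [weightJn] at hw
    have hvec : ∀ x y z, x = ν 0 → y = ν 1 → z = ν 2 → ![x, y, z] = ν := by
      rintro x y z rfl rfl rfl
      funext i
      fin_cases i <;> rfl
    obtain h | h | h : ν 2 = 0 ∨ ν 2 = 1 ∨ 2 ≤ ν 2 := by omega
    · exact Or.inr ⟨ν 1, by omega, hvec _ _ _ (by omega) rfl h.symm⟩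
    · rw [h, mul_one] at hw
      exact Or.inl ⟨ν 1, by omega, hvec _ _ _ (by omega) rfl h.symm⟩
    · have := Nat.mul_le_mul_left (d + 1 - 2 * n) h
      omega

lemma card_Jn {d n : ℕ} (hn : 3 * n < d) : #(Jn d n) = d + 1 := by
  have hinj : ∀ c, Function.Injective fun a : ℕ => ![d - a - c, a, c] :=
    fun c a b h => by simpa using congrFun h 1
  rw [Jn, card_union_of_disjoint, card_image_of_injective _ (hinj 1),
    card_image_of_injective _ (by simpa using hinj 0), card_range, card_range]
  · omega
  · simp only [disjoint_left, mem_image, mem_range]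
    rintro _ ⟨a, -, rfl⟩ ⟨b, -, h⟩
    simpa using congrFun h 2

theorem omega_mJn_min_general (d n : ℕ) (hn : 3 * n < d) :
    ∀ J' ∈ Nd d, J' ≠ Jn d n →
      dotp (omegaN d n) (mJ (Jn d n)) < dotp (omegaN d n) (mJ J') := by
  rintro J' ⟨hJ'Δ, hJ'card⟩ hne
  have h2n : 2 * n ≤ d + 1 := by omega
  rw [dotp_mJ, dotp_mJ]
  refine sum_lt_sum_of_card_eq_of_le_of_lt (B := (2 * n - d - 2) * d + 3 * ((d - n : ℕ) : ℝ))
    (by rw [hJ'card, card_Jn hn]) hne.symm (fun ν hν => ?_) (fun ν hν hνJ => ?_)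
  · obtain ⟨hΔ, hw⟩ := (mem_Jn_iff hn).1 hν
    rw [dotp_omegaN_of_mem_Delta h2n hΔ]
    gcongr
  · have hΔ := hJ'Δ hν
    have hw : d - n < weightJn d n ν := by
      by_contra! hw
      exact hνJ ((mem_Jn_iff hn).2 ⟨hΔ, hw⟩)
    rw [dotp_omegaN_of_mem_Delta h2n hΔ]
    gcongr

/-- For `d ≥ 3` and `0 ≤ n < d/3` one has `ω(n)·m_{J(n)} < ω(n)·m_{J'}`
for every `J' ∈ N(d)` with `J' ≠ J(n)`. -/
theorem omega_mJn_min (d n : ℕ) (hd : 3 ≤ d) (hn : 3 * n < d) :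
    ∀ J' ∈ Nd d, J' ≠ Jn d n →
      dotp (omegaN d n) (mJ (Jn d n)) < dotp (omegaN d n) (mJ J') :=
  omega_mJn_min_general d n hn
end
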